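/- For every n, the quotient of the type Term n of quantum-logic terms in n variables by the equivalence relation 't ≈ s iff eval t U = eval s U for every assignment U : Fin n → Submodule ℂ (EuclideanSpace ℂ (Fin 2))' has cardinality at most (2n+2)^((2n+2)^n). -/

import Mathlib

/-!
In a plane every subspace is `⊥`, `⊤` or a line, and two distinct subspaces meet in `⊥` unless
one of them is `⊤` (dually for joins). So if the lines `v i` are pairwise distinct and
non-orthogonal, the subspaces `⊥`, `⊤`, `v i`, `(v i)ᗮ` form an ortholattice `MO` whose operations
are the same in every plane. Choosing one line from each pair `{x, xᗮ}` among the values of an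
assignment `U` exhibits `U` as a substitution into such a family; substituting fixed lines `ℓ j`
instead gives an assignment with values among the `2n + 2` subspaces `⊥`, `⊤`, `ℓ j`, `(ℓ j)ᗮ`,
and the values of all terms at the two assignments correspond bijectively. So the class of a term
is determined by its table of values on these `(2n + 2)ⁿ` assignments.
-/

/-- A quantum-logic term in `n` variables. -/
inductive Term (n : ℕ) : Type
  | var : Fin n → Term n
  | neg : Term n → Term n
  | inf : Term n → Term n → Term n
  | sup : Term n → Term n → Term n

/-- The value of a quantum-logic term under an assignment of subspaces
to the variables.  Negation is interpreted as orthogonal complement. -/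
def Term.eval {n : ℕ} {𝕜 E : Type*} [RCLike 𝕜] [NormedAddCommGroup E]
    [InnerProductSpace 𝕜 E] : Term n → (Fin n → Submodule 𝕜 E) → Submodule 𝕜 E
  | .var i, U => U i
  | .neg t, U => (t.eval U)ᗮ
  | .inf s t, U => s.eval U ⊓ t.eval U
  | .sup s t, U => s.eval U ⊔ t.eval U

/-- Two terms are equivalent iff their values agree on every assignment
of subspaces of `ℂ²` to their variables. -/
def equiv2D (n : ℕ) : Setoid (Term n) where
  r t s := ∀ U : Fin n → Submodule ℂ (EuclideanSpace ℂ (Fin 2)), t.eval U = s.eval U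
  iseqv := ⟨fun _ _ => rfl, fun h U => (h U).symm, fun h₁ h₂ U => (h₁ U).trans (h₂ U)⟩

open Module Submodule Function

section Lattice

variable {𝕜 E : Type*} [RCLike 𝕜] [NormedAddCommGroup E] [InnerProductSpace 𝕜 E]

theorem Submodule.ne_orthogonal_of_finrank_eq_one {x : Submodule 𝕜 E} (hx : finrank 𝕜 x = 1) :
    x ≠ xᗮ := by
  intro h
  have hbot : x = ⊥ := by rw [← x.inf_orthogonal_eq_bot, ← h, inf_idem]
  rw [hbot, finrank_bot] at hx
  exact zero_ne_one hx

variable [FiniteDimensional 𝕜 E]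

theorem Submodule.finrank_orthogonal_of_finrank_eq_two (hE : finrank 𝕜 E = 2)
    (x : Submodule 𝕜 E) : finrank 𝕜 xᗮ = 2 - finrank 𝕜 x := by
  have := x.finrank_add_finrank_orthogonal
  omega

theorem Submodule.inf_eq_ite_of_ne (hE : finrank 𝕜 E = 2) {x y : Submodule 𝕜 E} (hxy : x ≠ y) :
    x ⊓ y = if finrank 𝕜 x = 2 then y else if finrank 𝕜 y = 2 then x else ⊥ := by
  have hx := x.finrank_le
  have hy := y.finrank_le
  rw [hE] at hx hy
  split_ifs with h2x h2y
  · rw [eq_top_of_finrank_eq (h2x.trans hE.symm), top_inf_eq]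
  · rw [eq_top_of_finrank_eq (h2y.trans hE.symm), inf_top_eq]
  · by_contra hne
    have h1 : 1 ≤ finrank 𝕜 (x ⊓ y : Submodule 𝕜 E) :=
      Nat.one_le_iff_ne_zero.2 fun h => hne (finrank_eq_zero.1 h)
    exact hxy <| (eq_of_le_of_finrank_le inf_le_left (by omega)).symm.trans
      (eq_of_le_of_finrank_le inf_le_right (by omega))

end Lattice

section MO

variable {𝕜 𝕜' E F ι κ : Type*} [RCLike 𝕜] [NormedAddCommGroup E] [InnerProductSpace 𝕜 E]
  [RCLike 𝕜'] [NormedAddCommGroup F] [InnerProductSpace 𝕜' F]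

/-- Enumerates the ortholattice `MO_ι` spanned by the lines `v i`: `(none, false) ↦ ⊥`,
`(none, true) ↦ ⊤`, `(some i, false) ↦ v i`, `(some i, true) ↦ (v i)ᗮ`. -/
def moElem (v : ι → Submodule 𝕜 E) (k : Option ι × Bool) : Submodule 𝕜 E :=
  bif k.2 then (k.1.elim ⊥ v)ᗮ else k.1.elim ⊥ v

structure IsMOFamily (v : ι → Submodule 𝕜 E) : Prop where
  finrank_eq_one : ∀ i, finrank 𝕜 (v i) = 1
  injective : Injective v
  ne_orthogonal : ∀ i j, v i ≠ (v j)ᗮ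

theorem IsMOFamily.comp {v : ι → Submodule 𝕜 E} (hv : IsMOFamily v) {f : κ → ι}
    (hf : Injective f) : IsMOFamily (v ∘ f) :=
  ⟨fun _ => hv.finrank_eq_one _, hv.injective.comp hf, fun _ _ => hv.ne_orthogonal _ _⟩

theorem moElem_comp (v : ι → Submodule 𝕜 E) (f : κ → ι) (k : Option κ × Bool) :
    moElem (v ∘ f) k = moElem v (k.1.map f, k.2) := by
  rcases k with ⟨_ | _, _⟩ <;> rfl

variable [FiniteDimensional 𝕜 E] [FiniteDimensional 𝕜' F]

theorem moElem_not (v : ι → Submodule 𝕜 E) (k : Option ι × Bool) :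
    moElem v (k.1, !k.2) = (moElem v k)ᗮ := by
  rcases k with ⟨o, _ | _⟩
  · rfl
  · exact (orthogonal_orthogonal _).symm

theorem finrank_moElem (hE : finrank 𝕜 E = 2) {v : ι → Submodule 𝕜 E}
    (hv : ∀ i, finrank 𝕜 (v i) = 1) (k : Option ι × Bool) :
    finrank 𝕜 (moElem v k) =
      bif k.2 then 2 - k.1.elim 0 (fun _ => 1) else k.1.elim 0 (fun _ => 1) := by
  rcases k with ⟨_ | i, _ | _⟩
  · exact finrank_bot 𝕜 E
  · show finrank 𝕜 (⊥ : Submodule 𝕜 E)ᗮ = 2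
    rw [bot_orthogonal_eq_top, finrank_top, hE]
  · exact hv i
  · show finrank 𝕜 (v i)ᗮ = 2 - 1
    rw [finrank_orthogonal_of_finrank_eq_two hE, hv]

theorem IsMOFamily.moElem_injective (hE : finrank 𝕜 E = 2) {v : ι → Submodule 𝕜 E}
    (hv : IsMOFamily v) : Injective (moElem v) := by
  rintro ⟨_ | i, b⟩ ⟨_ | j, b'⟩ h
  all_goals have hr := congrArg (fun x : Submodule 𝕜 E => finrank 𝕜 x) h
  all_goals simp only [finrank_moElem hE hv.finrank_eq_one] at hr
  · cases b <;> cases b' <;> simp_all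
  · cases b <;> cases b' <;> simp at hr
  · cases b <;> cases b' <;> simp at hr
  · cases b <;> cases b' <;> simp only [moElem, cond_false, cond_true, Option.elim_some] at h
    · rw [hv.injective h]
    · exact absurd h (hv.ne_orthogonal i j)
    · exact absurd h.symm (hv.ne_orthogonal j i)
    · have h' : v i = v j := by simpa using congrArg (fun x : Submodule 𝕜 E => xᗮ) h
      rw [hv.injective h']

section
variable (hE : finrank 𝕜 E = 2) (hF : finrank 𝕜' F = 2) {v : ι → Submodule 𝕜 E}
  {w : ι → Submodule 𝕜' F} (hv : IsMOFamily v) (hw : IsMOFamily w)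
include hE hF hv hw

theorem exists_moElem_inf (k k' : Option ι × Bool) :
    ∃ k'', moElem v k ⊓ moElem v k' = moElem v k'' ∧ moElem w k ⊓ moElem w k' = moElem w k'' := by
  by_cases hk : k = k'
  · exact ⟨k, by simp [hk]⟩
  rw [inf_eq_ite_of_ne hE ((hv.moElem_injective hE).ne hk),
    inf_eq_ite_of_ne hF ((hw.moElem_injective hF).ne hk), finrank_moElem hE hv.finrank_eq_one,
    finrank_moElem hE hv.finrank_eq_one, finrank_moElem hF hw.finrank_eq_one,
    finrank_moElem hF hw.finrank_eq_one]
  split_ifs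
  · exact ⟨k', rfl, rfl⟩
  · exact ⟨k, rfl, rfl⟩
  · exact ⟨(none, false), rfl, rfl⟩

theorem exists_moElem_sup (k k' : Option ι × Bool) :
    ∃ k'', moElem v k ⊔ moElem v k' = moElem v k'' ∧ moElem w k ⊔ moElem w k' = moElem w k'' := by
  obtain ⟨k'', hv'', hw''⟩ := exists_moElem_inf hE hF hv hw (k.1, !k.2) (k'.1, !k'.2)
  refine ⟨(k''.1, !k''.2), ?_, ?_⟩
  · rw [moElem_not, ← hv'', moElem_not, moElem_not, inf_orthogonal, orthogonal_orthogonal]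
  · rw [moElem_not, ← hw'', moElem_not, moElem_not, inf_orthogonal, orthogonal_orthogonal]

theorem Term.exists_eval_moElem {n : ℕ} (p : Fin n → Option ι × Bool) (t : Term n) :
    ∃ k, t.eval (moElem v ∘ p) = moElem v k ∧ t.eval (moElem w ∘ p) = moElem w k := by
  induction t with
  | var i => exact ⟨p i, rfl, rfl⟩
  | neg t ih =>
    obtain ⟨k, hvk, hwk⟩ := ih
    exact ⟨(k.1, !k.2), by rw [Term.eval, hvk, moElem_not], by rw [Term.eval, hwk, moElem_not]⟩
  | inf s t ihs iht =>
    obtain ⟨k, hvk, hwk⟩ := ihs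
    obtain ⟨k', hvk', hwk'⟩ := iht
    simpa only [Term.eval, hvk, hwk, hvk', hwk'] using exists_moElem_inf hE hF hv hw k k'
  | sup s t ihs iht =>
    obtain ⟨k, hvk, hwk⟩ := ihs
    obtain ⟨k', hvk', hwk'⟩ := iht
    simpa only [Term.eval, hvk, hwk, hvk', hwk'] using exists_moElem_sup hE hF hv hw k k'

end

theorem exists_isMOFamily_forall_exists_moElem_eq (hF : finrank 𝕜' F = 2)
    (U : ι → Submodule 𝕜' F) :
    ∃ (J : Set ι) (w : J → Submodule 𝕜' F), IsMOFamily w ∧ ∀ i, ∃ k, U i = moElem w k := by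
  rcases isEmpty_or_nonempty ι with hι | hι
  · exact ⟨∅, fun _ => ⊥, ⟨isEmptyElim, fun j => isEmptyElim j, isEmptyElim⟩, isEmptyElim⟩
  -- `rep` picks one index for each pair `{x, xᗮ}`
  let pair (i : ι) : Set (Submodule 𝕜' F) := {U i, (U i)ᗮ}
  let rep (i : ι) : ι := invFun pair (pair i)
  have pair_rep (i : ι) : pair (rep i) = pair i := invFun_eq ⟨i, rfl⟩
  have rep_eq {i j : ι} (h : pair i = pair j) : rep i = rep j := congrArg (invFun pair) h
  have pair_eq {i j : ι} (h : U i = (U j)ᗮ) : pair i = pair j := by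
    simp only [pair, h, orthogonal_orthogonal, Set.pair_comm]
  refine ⟨{j | finrank 𝕜' (U j) = 1 ∧ rep j = j}, fun j => U j,
    ⟨fun j => j.2.1, ?_, ?_⟩, fun i => ?_⟩
  · intro i j h
    have hp : pair i = pair j := by simp only [pair, show U i = U j from h]
    exact Subtype.ext (i.2.2.symm.trans ((rep_eq hp).trans j.2.2))
  · intro i j h
    have hij : i = j := Subtype.ext (i.2.2.symm.trans ((rep_eq (pair_eq h)).trans j.2.2))
    subst hij
    exact ne_orthogonal_of_finrank_eq_one i.2.1 h
  have hle : finrank 𝕜' (U i) ≤ 2 := hF ▸ (U i).finrank_le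
  obtain h0 | h1 | h2 : finrank 𝕜' (U i) = 0 ∨ finrank 𝕜' (U i) = 1 ∨ finrank 𝕜' (U i) = 2 := by
    omega
  · exact ⟨(none, false), finrank_eq_zero.1 h0⟩
  · have hrep : U (rep i) ∈ pair i := pair_rep i ▸ Set.mem_insert _ _
    have rep_rep : rep (rep i) = rep i := rep_eq (pair_rep i)
    rcases hrep with h | h
    · exact ⟨(some ⟨rep i, by rw [h]; exact h1, rep_rep⟩, false), h.symm⟩
    · refine ⟨(some ⟨rep i, ?_, rep_rep⟩, true), ?_⟩
      · rw [h, finrank_orthogonal_of_finrank_eq_two hF, h1]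
      · show U i = (U (rep i))ᗮ
        rw [h, orthogonal_orthogonal]
  · exact ⟨(none, true), (eq_top_of_finrank_eq (h2.trans hF.symm)).trans bot_orthogonal_eq_top.symm⟩

theorem Term.eval_eq_of_forall_eval_moElem_eq (hE : finrank 𝕜 E = 2) (hF : finrank 𝕜' F = 2)
    {n : ℕ} {v : Fin n → Submodule 𝕜 E} (hv : IsMOFamily v) {t s : Term n}
    (h : ∀ q : Fin n → Option (Fin n) × Bool, t.eval (moElem v ∘ q) = s.eval (moElem v ∘ q))
    (U : Fin n → Submodule 𝕜' F) : t.eval U = s.eval U := by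
  obtain ⟨J, w, hw, hU⟩ := exists_isMOFamily_forall_exists_moElem_eq hF U
  choose p hp using hU
  have hvJ : IsMOFamily (v ∘ Subtype.val : J → Submodule 𝕜 E) := hv.comp Subtype.val_injective
  obtain ⟨kt, hvt, hwt⟩ := t.exists_eval_moElem hE hF hvJ hw p
  obtain ⟨ks, hvs, hws⟩ := s.exists_eval_moElem hE hF hvJ hw p
  have hpush : moElem (v ∘ Subtype.val) ∘ p = moElem v ∘ fun i => ((p i).1.map (↑), (p i).2) :=
    funext fun i => moElem_comp v Subtype.val (p i)
  have hk : kt = ks := hvJ.moElem_injective hE (by rw [← hvt, ← hvs, hpush, h])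
  have hU : U = moElem w ∘ p := funext hp
  rw [hU, hwt, hws, hk]

end MO

/-- The line through `(1, i + 1)`. Two such lines are never orthogonal, since
`⟪(1, j + 1), (1, i + 1)⟫ = 1 + (j + 1) (i + 1) ≠ 0`. -/
noncomputable def planeLine (𝕜 : Type*) [RCLike 𝕜] (i : ℕ) :
    Submodule 𝕜 (EuclideanSpace 𝕜 (Fin 2)) :=
  𝕜 ∙ !₂[1, (i + 1 : 𝕜)]

theorem isMOFamily_planeLine (𝕜 : Type*) [RCLike 𝕜] : IsMOFamily (planeLine 𝕜) where
  finrank_eq_one i := finrank_span_singleton fun h => by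
    simpa only [Matrix.cons_val_zero, PiLp.zero_apply, one_ne_zero] using congrArg (· 0) h
  injective i j h := by
    have hi : !₂[1, (i + 1 : 𝕜)] ∈ planeLine 𝕜 j := h ▸ mem_span_singleton_self _
    obtain ⟨c, hc⟩ := mem_span_singleton.1 hi
    have hc0 : c = 1 := by
      simpa only [PiLp.smul_apply, Matrix.cons_val_zero, smul_eq_mul, mul_one] using
        congrArg (· 0) hc
    have hc1 := congrArg (· 1) hc
    simp only [PiLp.smul_apply, Matrix.cons_val_one, Matrix.cons_val_fin_one, smul_eq_mul, hc0,
      one_mul, add_left_inj, Nat.cast_inj] at hc1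
    exact hc1.symm
  ne_orthogonal i j h := by
    have hi : !₂[1, (i + 1 : 𝕜)] ∈ (planeLine 𝕜 j)ᗮ := h ▸ mem_span_singleton_self _
    have hinner := mem_orthogonal_singleton_iff_inner_right.1 hi
    simp only [PiLp.inner_apply, RCLike.inner_apply, Fin.sum_univ_two, Matrix.cons_val_zero,
      map_one, mul_one, Matrix.cons_val_one, Matrix.cons_val_fin_one, map_add, map_natCast]
      at hinner
    have hnat : 1 + (i + 1) * (j + 1) = 0 := by exact_mod_cast hinner
    omega

theorem card_quotient_equiv2D_le (n : ℕ) :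
    Cardinal.mk (Quotient (equiv2D n)) ≤ ((2 * n + 2) ^ ((2 * n + 2) ^ n) : ℕ) := by
  let ℓ : Fin n → Submodule ℂ (EuclideanSpace ℂ (Fin 2)) := fun i => planeLine ℂ i
  have hℓ : IsMOFamily ℓ := (isMOFamily_planeLine ℂ).comp Fin.val_injective
  have hE : finrank ℂ (EuclideanSpace ℂ (Fin 2)) = 2 := finrank_euclideanSpace_fin
  let table (t : Term n) (q : Fin n → Option (Fin n) × Bool) : Option (Fin n) × Bool :=
    invFun (moElem ℓ) (t.eval (moElem ℓ ∘ q))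
  have moElem_table (t q) : moElem ℓ (table t q) = t.eval (moElem ℓ ∘ q) :=
    invFun_eq <| (t.exists_eval_moElem hE hE hℓ hℓ q).imp fun _ hk => hk.1.symm
  let Φ : Quotient (equiv2D n) → (Fin n → Option (Fin n) × Bool) → Option (Fin n) × Bool :=
    Quotient.lift table fun t s h => funext fun q => congrArg (invFun (moElem ℓ)) (h _)
  have hΦ : Injective Φ := by
    refine Quotient.ind₂ fun t s h => Quotient.sound ?_
    exact Term.eval_eq_of_forall_eval_moElem_eq hE hE hℓ fun q => by
      rw [← moElem_table, ← moElem_table]; exact congrArg (moElem ℓ) (congrFun h q)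
  calc Cardinal.mk (Quotient (equiv2D n))
      ≤ Cardinal.mk ((Fin n → Option (Fin n) × Bool) → Option (Fin n) × Bool) :=
        Cardinal.mk_le_of_injective hΦ
    _ = ((2 * n + 2) ^ ((2 * n + 2) ^ n) : ℕ) := by
        rw [Cardinal.mk_fintype, Fintype.card_fun, Fintype.card_fun, Fintype.card_prod,
          Fintype.card_option, Fintype.card_fin, Fintype.card_bool]
        ring_nf
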